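/- arXiv:1603.01751 — 3 statements merged into one kernel-verified Lean document; each statement's English description precedes it below -/
import Mathlib

section
/- Let L : Sym(n,ℝ) → Sym(n,ℝ) be a linear map that maps positive semidefinite matrices to positive semidefinite matrices. If there exists a positive definite matrix P with L(P) - P negative definite, then for every positive semidefinite Q_0 the sequence Q_{k+1} = L(Q_k) converges to 0. -/
/-!
Positivity of `L` makes it monotone for the Loewner order `≼`. Since `P` and `P - L P` are
positive definite, a large multiple of either dominates any symmetric matrix, so
`L P ≼ (1 - ε) • P` and `Q₀ ≼ c • P` for some `ε ∈ (0, 1]` and `c ≥ 0`. Iterating gives `0 ≼ Lᵏ Q₀ ≼ c (1 - ε)ᵏ • P`,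
and a positive semidefinite matrix is entrywise bounded by its diagonal, which here tends to `0`.
-/

open Matrix Filter Topology
open scoped MatrixOrder

section OrderedModule

variable {E : Type*} [AddCommGroup E] [PartialOrder E] [Module ℝ E] {L : Module.End ℝ E}

lemma Module.End.pow_apply_nonneg (hL : ∀ x, 0 ≤ x → 0 ≤ L x) {x : E} (hx : 0 ≤ x) (k : ℕ) :
    0 ≤ (L ^ k) x := by
  induction k with
  | zero => exact hx
  | succ k ih => rw [pow_succ', Module.End.mul_apply]; exact hL _ ih

lemma Module.End.pow_apply_le_smul [IsOrderedAddMonoid E] [PosSMulMono ℝ E] (hL : ∀ x, 0 ≤ x → 0 ≤ L x) {p x : E}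
    {c μ : ℝ} (hc : 0 ≤ c) (hμ : 0 ≤ μ) (hLp : L p ≤ μ • p) (hx : x ≤ c • p) (k : ℕ) :
    (L ^ k) x ≤ (c * μ ^ k) • p := by
  have hmono : Monotone L := (PositiveLinearMap.mk₀ L hL).monotone
  induction k with
  | zero => simpa using hx
  | succ k ih =>
    calc (L ^ (k + 1)) x = L ((L ^ k) x) := by rw [pow_succ', Module.End.mul_apply]
      _ ≤ L ((c * μ ^ k) • p) := hmono ih
      _ = (c * μ ^ k) • L p := map_smul ..
      _ ≤ (c * μ ^ k) • μ • p := smul_le_smul_of_nonneg_left hLp (by positivity)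
      _ = (c * μ ^ (k + 1)) • p := by rw [smul_smul, pow_succ, mul_assoc]

end OrderedModule

lemma IsStrictlyPositive.eventually_le_smul {A : Type*} [TopologicalSpace A] [Ring A] [StarRing A]
    [PartialOrder A] [StarOrderedRing A] [Algebra ℝ A] [IsOrderedModule ℝ A]
    [NonnegSpectrumClass ℝ A] [ContinuousFunctionalCalculus ℝ A IsSelfAdjoint] {a x : A}
    (ha : IsStrictlyPositive a) (hx : IsSelfAdjoint x) : ∀ᶠ c : ℝ in atTop, x ≤ c • a := by
  cases subsingleton_or_nontrivial A
  · exact Eventually.of_forall fun _ => (Subsingleton.elim _ _).le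
  obtain ⟨r, hr, hra⟩ :=
    (CFC.exists_pos_algebraMap_le_iff ha.isSelfAdjoint).2 fun _ hx => ha.spectrum_pos hx
  obtain ⟨s, hs⟩ := (ContinuousFunctionalCalculus.isCompact_spectrum (R := ℝ) x).bddAbove
  filter_upwards [eventually_ge_atTop (s / r), eventually_ge_atTop 0] with c hsc hc
  calc x ≤ algebraMap ℝ A s := le_algebraMap_of_spectrum_le hs
    _ ≤ algebraMap ℝ A (c * r) := by
      simp only [Algebra.algebraMap_eq_smul_one]
      exact smul_le_smul_of_nonneg_right ((div_le_iff₀ hr).1 hsc) zero_le_one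
    _ = c • algebraMap ℝ A r := by rw [Algebra.smul_def, map_mul]
    _ ≤ c • a := smul_le_smul_of_nonneg_left hra hc

namespace Matrix

variable {n : Type*} [Fintype n]

lemma PosSemidef.abs_apply_le_add {X : Matrix n n ℝ} (hX : X.PosSemidef) (i j : n) :
    |X i j| ≤ X i i + X j j := by
  classical
  have hsymm : X j i = X i j := by simpa using congrFun (congrFun hX.1 i) j
  have hplus := hX.dotProduct_mulVec_nonneg (Pi.single i 1 + Pi.single j 1)
  have hminus := hX.dotProduct_mulVec_nonneg (Pi.single i 1 - Pi.single j 1)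
  simp only [star_trivial, mulVec_add, mulVec_sub, mulVec_single, MulOpposite.op_one, one_smul,
    dotProduct_add, dotProduct_sub, add_dotProduct, sub_dotProduct, single_dotProduct, col_apply,
    one_mul, hsymm] at hplus hminus
  rw [abs_le]
  constructor <;> nlinarith

lemma tendsto_zero_of_nonneg_of_le_smul {X : ℕ → Matrix n n ℝ} {P : Matrix n n ℝ} {r : ℕ → ℝ}
    (hX : ∀ k, 0 ≤ X k) (hXP : ∀ k, X k ≤ r k • P) (hr : Tendsto r atTop (𝓝 0)) :
    Tendsto X atTop (𝓝 0) := by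
  have hdiag : ∀ k i, X k i i ≤ r k * P i i := fun k i => by
    simpa [sub_nonneg] using (le_iff.1 (hXP k)).diag_nonneg (i := i)
  refine tendsto_pi_nhds.2 fun i => tendsto_pi_nhds.2 fun j => ?_
  refine squeeze_zero_norm (fun k => ?_) (by simpa using hr.mul_const (P i i + P j j))
  calc ‖X k i j‖ ≤ X k i i + X k j j := (nonneg_iff_posSemidef.1 (hX k)).abs_apply_le_add i j
    _ ≤ r k * (P i i + P j j) := by linarith [hdiag k i, hdiag k j]

end Matrix

/-- Theorem 1, (iii) ⇒ stability of the monotone linear recursion: a quadratic Lyapunov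
certificate `P` for the positivity-preserving linear map `L` implies `L^[k] Q₀ → 0` for
every positive semidefinite initial condition `Q₀`. -/
theorem stmt4 (n : ℕ)
    (L : Module.End ℝ (Matrix (Fin n) (Fin n) ℝ))
    (hL : ∀ X : Matrix (Fin n) (Fin n) ℝ, X.PosSemidef → (L X).PosSemidef)
    (P : Matrix (Fin n) (Fin n) ℝ) (hP : P.PosDef)
    (hLyap : (P - L P).PosDef) :
    ∀ Q0 : Matrix (Fin n) (Fin n) ℝ, Q0.PosSemidef →
      Tendsto (fun k : ℕ => (L ^ k) Q0) atTop (nhds 0) := by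
  intro Q0 hQ0
  have hLpos : ∀ X, 0 ≤ X → 0 ≤ L X := fun X hX => (hL X (nonneg_iff_posSemidef.1 hX)).nonneg
  obtain ⟨c, hcP, hc⟩ := ((IsStrictlyPositive.eventually_le_smul hLyap.isStrictlyPositive hP.isHermitian).and
    (eventually_ge_atTop 1)).exists
  obtain ⟨d, hdQ, hd⟩ := ((IsStrictlyPositive.eventually_le_smul hP.isStrictlyPositive hQ0.isHermitian).and
    (eventually_ge_atTop 0)).exists
  have hLP : L P ≤ (1 - c⁻¹) • P := by
    rw [sub_smul, one_smul, le_sub_comm]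
    exact (inv_smul_le_iff_of_pos (by positivity)).2 hcP
  have hμ : 0 ≤ 1 - c⁻¹ := sub_nonneg.2 (inv_le_one_of_one_le₀ hc)
  have hμ1 : 1 - c⁻¹ < 1 := sub_lt_self _ (by positivity)
  refine tendsto_zero_of_nonneg_of_le_smul (fun k => L.pow_apply_nonneg hLpos hQ0.nonneg k)
    (L.pow_apply_le_smul hLpos hd hμ hLP hdQ) ?_
  simpa using (tendsto_pow_atTop_nhds_zero_of_lt_one hμ hμ1).const_mul d
end

section
/- Let A, E ∈ ℝ^{n×n} and let S : [0, T̄] → Sym(n,ℝ) be continuously differentiable and satisfy the differential linear matrix inequality -S'(τ) + AᵀS(τ) + S(τ)A + EᵀS(τ)E ≼ 0 for all τ ∈ [0, T̄]. Let Q : [0, T̄] → Sym(n,ℝ) solve Q'(τ) = AᵀQ(τ) + Q(τ)A + EᵀQ(τ)E with Q(0) = S(0). Then S(τ) ≽ Q(τ) for all τ ∈ [0, T̄]. -/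
/-!
Write `L X = AᵀX + XA + EᵀXE`. The difference `D = S - Q` is symmetric (the Lyapunov equation
commutes with transposition, so `Q = Qᵀ` by uniqueness), vanishes at `0`, and satisfies
`D' ≽ L D`. To see that `D` stays positive semidefinite, perturb it to `D + ε e^{cτ} I` with
`c > xᵀ (L I) x` on the unit sphere and look at the first time `τ₀` at which the perturbed matrix
acquires a unit null vector `x`. There the quadratic form `xᵀ (D + ε e^{cτ} I) x` has just
decreased to `0`, so its derivative is `≤ 0`; but at a null vector of a positive semidefinite
`P` one has `xᵀ (L P) x = (Ex)ᵀ P (Ex) ≥ 0`, which makes the derivative at least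
`ε e^{cτ₀} (c - xᵀ (L I) x) > 0`. Letting `ε → 0` gives `D ≽ 0`.
-/

open Matrix Set

theorem exists_first_zero_of_continuousOn {X : Type*} [TopologicalSpace X] [T2Space X]
    {K : Set X} (hK : IsCompact K) {f : ℝ → X → ℝ} {a b : ℝ}
    (hf : ContinuousOn (Function.uncurry f) (Icc a b ×ˢ K)) (ha : ∀ x ∈ K, 0 < f a x)
    {t₁ : ℝ} (ht₁ : t₁ ∈ Icc a b) {x₁ : X} (hx₁ : x₁ ∈ K) (hf₁ : f t₁ x₁ ≤ 0) :
    ∃ t₀ ∈ Ioc a b, ∃ x ∈ K, f t₀ x = 0 ∧ ∀ t ∈ Icc a t₀, ∀ y ∈ K, 0 ≤ f t y := by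
  have hbox : IsCompact (Icc a b ×ˢ K) := isCompact_Icc.prod hK
  have hC : IsCompact (Icc a b ×ˢ K ∩ Function.uncurry f ⁻¹' Iic 0) :=
    hbox.of_isClosed_subset (hf.preimage_isClosed_of_isClosed hbox.isClosed isClosed_Iic)
      inter_subset_left
  obtain ⟨⟨t₀, x⟩, ⟨⟨ht₀, hx⟩, hfx⟩, hmin⟩ :=
    hC.exists_isMinOn ⟨(t₁, x₁), ⟨ht₁, hx₁⟩, hf₁⟩ continuous_fst.continuousOn
  have hpos : ∀ t ∈ Ico a t₀, ∀ y ∈ K, 0 < f t y := fun t ht y hy => by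
    by_contra! hle
    have : t₀ ≤ t := hmin (a := (t, y)) ⟨⟨⟨ht.1, ht.2.le.trans ht₀.2⟩, hy⟩, hle⟩
    exact this.not_gt ht.2
  have hat₀ : a < t₀ := ht₀.1.lt_of_ne fun h => (ha x hx).not_ge (h ▸ hfx)
  have hnonneg : ∀ y ∈ K, 0 ≤ f t₀ y := fun y hy => by
    have hcont : ContinuousOn (fun t => f t y) (Icc a b) :=
      hf.comp (continuousOn_id.prodMk continuousOn_const) fun t ht => ⟨ht, hy⟩
    refine ContinuousWithinAt.closure_le (f := fun _ => (0 : ℝ)) (g := fun t => f t y)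
      (by simp [closure_Ico hat₀.ne, hat₀.le])
      continuousWithinAt_const ((hcont t₀ ht₀).mono fun t ht => ⟨ht.1, ht.2.le.trans ht₀.2⟩)
      fun t ht => (hpos t ht y hy).le
  refine ⟨t₀, ⟨hat₀, ht₀.2⟩, x, hx, le_antisymm hfx (hnonneg x hx), fun t ht y hy => ?_⟩
  rcases ht.2.lt_or_eq with h | rfl
  · exact (hpos t ⟨ht.1, h⟩ y hy).le
  · exact hnonneg y hy

theorem HasDerivAt.nonpos_of_isMinOn_Icc {g : ℝ → ℝ} {g' a b : ℝ} (hg : HasDerivAt g g' b)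
    (hab : a < b) (hmin : IsMinOn g (Icc a b) b) : g' ≤ 0 := by
  have := hmin.localize.hasFDerivWithinAt_nonneg hg.hasDerivWithinAt.hasFDerivWithinAt
    (sub_mem_posTangentConeAt_of_segment_subset
      (segment_symm ℝ b a ▸ (segment_eq_Icc hab.le).subset))
  rw [ContinuousLinearMap.toSpanSingleton_apply, smul_eq_mul] at this
  exact nonpos_of_mul_nonneg_right this (sub_neg.2 hab)

section

variable {m : Type*} [Fintype m]

def unitSphere (m : Type*) [Fintype m] : Set (m → ℝ) := {x | x ⬝ᵥ x = 1}

theorem isCompact_unitSphere : IsCompact (unitSphere m) := by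
  refine Metric.isCompact_of_isClosed_isBounded (isClosed_eq (by fun_prop) continuous_const)
    ((Metric.isBounded_closedBall (x := 0) (r := 1)).subset fun x (hx : x ⬝ᵥ x = 1) => ?_)
  rw [mem_closedBall_zero_iff, pi_norm_le_iff_of_nonneg zero_le_one]
  intro i
  rw [Real.norm_eq_abs, abs_le_one_iff_mul_self_le_one, ← hx]
  exact Finset.single_le_sum (f := fun k => x k * x k) (fun k _ => mul_self_nonneg _)
    (Finset.mem_univ i)

theorem exists_forall_unitSphere_dotProduct_mulVec_lt (M : Matrix m m ℝ) :
    ∃ c, ∀ x ∈ unitSphere m, x ⬝ᵥ M *ᵥ x < c := by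
  obtain ⟨c, hc⟩ :=
    (isCompact_unitSphere.image (f := fun x => x ⬝ᵥ M *ᵥ x) (by fun_prop)).bddAbove
  exact ⟨c + 1, fun x hx => (hc ⟨x, hx, rfl⟩).trans_lt (lt_add_one c)⟩

theorem posSemidef_of_unitSphere_nonneg {M : Matrix m m ℝ} (hM : M.IsSymm)
    (h : ∀ x ∈ unitSphere m, 0 ≤ x ⬝ᵥ M *ᵥ x) : M.PosSemidef := by
  refine .of_dotProduct_mulVec_nonneg (isHermitian_iff_isSymm.2 hM) fun x => ?_
  rw [star_trivial]
  rcases eq_or_ne x 0 with rfl | hx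
  · simp
  have hxx : 0 < x ⬝ᵥ x := (Finset.sum_nonneg fun i _ => mul_self_nonneg (x i)).lt_of_ne'
    (dotProduct_self_eq_zero.not.2 hx)
  have hs : 0 < √(x ⬝ᵥ x) := Real.sqrt_pos.2 hxx
  have hunit : (√(x ⬝ᵥ x))⁻¹ • x ∈ unitSphere m := by
    change _ = _
    rw [smul_dotProduct, dotProduct_smul, smul_eq_mul, smul_eq_mul, ← mul_assoc, ← mul_inv,
      Real.mul_self_sqrt hxx.le, inv_mul_cancel₀ hxx.ne']
  have := h _ hunit
  rw [mulVec_smul, smul_dotProduct, dotProduct_smul, smul_eq_mul, smul_eq_mul,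
    ← mul_assoc] at this
  exact nonneg_of_mul_nonneg_right this (by positivity)

def lyapunovMap (A E : Matrix m m ℝ) : Matrix m m ℝ →ₗ[ℝ] Matrix m m ℝ :=
  LinearMap.mulLeft ℝ Aᵀ + LinearMap.mulRight ℝ A +
    LinearMap.mulRight ℝ E ∘ₗ LinearMap.mulLeft ℝ Eᵀ

theorem lyapunovMap_apply (A E X : Matrix m m ℝ) :
    lyapunovMap A E X = Aᵀ * X + X * A + Eᵀ * X * E := rfl

theorem lyapunovMap_transpose (A E X : Matrix m m ℝ) :
    lyapunovMap A E Xᵀ = (lyapunovMap A E X)ᵀ := by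
  simp only [lyapunovMap_apply, transpose_add, transpose_mul, transpose_transpose,
    Matrix.mul_assoc]
  abel

theorem dotProduct_lyapunovMap_mulVec_nonneg (A E : Matrix m m ℝ) {P : Matrix m m ℝ}
    (hP : P.PosSemidef) {x : m → ℝ} (hx : P *ᵥ x = 0) :
    0 ≤ x ⬝ᵥ lyapunovMap A E P *ᵥ x := by
  have hxP : x ᵥ* P = 0 := by
    rw [← mulVec_transpose, (isHermitian_iff_isSymm.1 hP.isHermitian).eq, hx]
  rw [lyapunovMap_apply, add_mulVec, add_mulVec, dotProduct_add, dotProduct_add,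
    ← mulVec_mulVec, hx, mulVec_zero, dotProduct_zero, ← mulVec_mulVec, dotProduct_mulVec x P,
    hxP, zero_dotProduct, zero_add, zero_add, ← mulVec_mulVec, ← mulVec_mulVec, dotProduct_mulVec,
    vecMul_transpose]
  simpa using hP.dotProduct_mulVec_nonneg (E *ᵥ x)

theorem eqOn_of_hasDerivAt_lyapunovMap (A E : Matrix m m ℝ) {a b : ℝ}
    {X Y : ℝ → Matrix m m ℝ}
    (hX : ∀ τ ∈ Icc a b, ∀ i j, HasDerivAt (fun s => X s i j) (lyapunovMap A E (X τ) i j) τ)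
    (hY : ∀ τ ∈ Icc a b, ∀ i j, HasDerivAt (fun s => Y s i j) (lyapunovMap A E (Y τ) i j) τ)
    (ha : X a = Y a) : EqOn X Y (Icc a b) := by
  let v : (m → m → ℝ) →L[ℝ] (m → m → ℝ) := LinearMap.toContinuousLinearMap
    ((ofLinearEquiv ℝ).symm.toLinearMap ∘ₗ lyapunovMap A E ∘ₗ (ofLinearEquiv ℝ).toLinearMap)
  have hsol (Z : ℝ → Matrix m m ℝ)
      (hZ : ∀ τ ∈ Icc a b, ∀ i j, HasDerivAt (fun s => Z s i j) (lyapunovMap A E (Z τ) i j) τ) :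
      ∀ τ ∈ Icc a b, HasDerivAt (fun s => of.symm (Z s)) (v (of.symm (Z τ))) τ :=
    fun τ hτ => hasDerivAt_pi.2 fun i => hasDerivAt_pi.2 (hZ τ hτ i)
  have := ODE_solution_unique (v := fun _ => v) (fun _ => v.lipschitz)
    (HasDerivAt.continuousOn (hsol X hX))
    (fun τ hτ => (hsol X hX τ (Ico_subset_Icc_self hτ)).hasDerivWithinAt)
    (HasDerivAt.continuousOn (hsol Y hY))
    (fun τ hτ => (hsol Y hY τ (Ico_subset_Icc_self hτ)).hasDerivWithinAt) (congrArg of.symm ha)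
  exact fun τ hτ => of.symm.injective (this hτ)

theorem isSymm_of_hasDerivAt_lyapunovMap (A E : Matrix m m ℝ) {a b : ℝ}
    {X : ℝ → Matrix m m ℝ}
    (hX : ∀ τ ∈ Icc a b, ∀ i j, HasDerivAt (fun s => X s i j) (lyapunovMap A E (X τ) i j) τ)
    (ha : (X a).IsSymm) : ∀ τ ∈ Icc a b, (X τ).IsSymm := by
  refine fun τ hτ => eqOn_of_hasDerivAt_lyapunovMap A E (X := fun s => (X s)ᵀ)
    (fun τ hτ i j => ?_) hX ha hτ
  rw [lyapunovMap_transpose]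
  exact hX τ hτ j i

theorem hasDerivAt_dotProduct_mulVec {M : ℝ → Matrix m m ℝ} {M' : Matrix m m ℝ} {t : ℝ}
    (h : ∀ i j, HasDerivAt (fun s => M s i j) (M' i j) t) (x : m → ℝ) :
    HasDerivAt (fun s => x ⬝ᵥ M s *ᵥ x) (x ⬝ᵥ M' *ᵥ x) t := by
  simp only [dotProduct, mulVec]
  exact HasDerivAt.fun_sum fun i _ =>
    (HasDerivAt.fun_sum fun j _ => (h i j).mul_const (x j)).const_mul (x i)

theorem ContinuousOn.dotProduct_mulVec_prod {Y : Type*} [TopologicalSpace Y]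
    {D : Y → Matrix m m ℝ} {s : Set Y} (hD : ContinuousOn D s) (t : Set (m → ℝ)) :
    ContinuousOn (fun p : Y × (m → ℝ) => p.2 ⬝ᵥ D p.1 *ᵥ p.2) (s ×ˢ t) := by
  have hq : Continuous fun p : Matrix m m ℝ × (m → ℝ) => p.2 ⬝ᵥ p.1 *ᵥ p.2 := by fun_prop
  exact hq.comp_continuousOn ((hD.comp continuousOn_fst fun p hp => hp.1).prodMk continuousOn_snd)

variable [DecidableEq m] (A E : Matrix m m ℝ) {a b : ℝ} {D dD : ℝ → Matrix m m ℝ}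

theorem dotProduct_mulVec_add_mul_exp_pos {c : ℝ}
    (hc : ∀ x ∈ unitSphere m, x ⬝ᵥ lyapunovMap A E 1 *ᵥ x < c)
    (hsym : ∀ τ ∈ Icc a b, (D τ).IsSymm)
    (hder : ∀ τ ∈ Icc a b, ∀ i j, HasDerivAt (fun s => D s i j) (dD τ i j) τ)
    (hineq : ∀ τ ∈ Icc a b, (dD τ - lyapunovMap A E (D τ)).PosSemidef)
    (ha : (D a).PosSemidef) {ε : ℝ} (hε : 0 < ε) :
    ∀ τ ∈ Icc a b, ∀ x ∈ unitSphere m, 0 < x ⬝ᵥ D τ *ᵥ x + ε * Real.exp (c * τ) := by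
  by_contra! hbad
  obtain ⟨τ₁, hτ₁, x₁, hx₁, hneg⟩ := hbad
  have hDcont : ContinuousOn D (Icc a b) := continuousOn_pi.2 fun i => continuousOn_pi.2 fun j =>
    HasDerivAt.continuousOn fun τ hτ => hder τ hτ i j
  obtain ⟨t₀, ht₀, x, hx, hfx, hmin⟩ := exists_first_zero_of_continuousOn
    (f := fun t x => x ⬝ᵥ D t *ᵥ x + ε * Real.exp (c * t)) isCompact_unitSphere
    ((hDcont.dotProduct_mulVec_prod _).add (by fun_prop))
    (fun x _ => add_pos_of_nonneg_of_pos (by simpa using ha.dotProduct_mulVec_nonneg x)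
      (by positivity)) hτ₁ hx₁ hneg
  have ht₀' : t₀ ∈ Icc a b := Ioc_subset_Icc_self ht₀
  set r := ε * Real.exp (c * t₀)
  have hquad (y : m → ℝ) : y ⬝ᵥ (D t₀ + r • 1) *ᵥ y = y ⬝ᵥ D t₀ *ᵥ y + r * (y ⬝ᵥ y) := by
    rw [add_mulVec, smul_mulVec, one_mulVec, dotProduct_add, dotProduct_smul, smul_eq_mul]
  have hP : (D t₀ + r • 1).PosSemidef :=
    posSemidef_of_unitSphere_nonneg ((hsym t₀ ht₀').add (isSymm_one.smul r)) fun y hy => by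
      rw [hquad, show y ⬝ᵥ y = 1 from hy, mul_one]
      exact hmin t₀ (right_mem_Icc.2 ht₀.1.le) y hy
  have hPx : (D t₀ + r • 1) *ᵥ x = 0 := by
    rw [← hP.dotProduct_mulVec_zero_iff, star_trivial, hquad, show x ⬝ᵥ x = 1 from hx, mul_one]
    exact hfx
  have hL := dotProduct_lyapunovMap_mulVec_nonneg A E hP hPx
  have hdD := (hineq t₀ ht₀').dotProduct_mulVec_nonneg x
  have hderiv : HasDerivAt (fun t => x ⬝ᵥ D t *ᵥ x + ε * Real.exp (c * t))
      (x ⬝ᵥ dD t₀ *ᵥ x + r * c) t₀ := by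
    refine ((hasDerivAt_dotProduct_mulVec (hder t₀ ht₀') x).add
      (((hasDerivAt_id t₀).const_mul c).exp.const_mul ε)).congr_deriv ?_
    rw [id_eq, mul_one, ← mul_assoc]
  have hslope := hderiv.nonpos_of_isMinOn_Icc ht₀.1 fun t ht => hfx.trans_le (hmin t ht x hx)
  have hc₀ := mul_lt_mul_of_pos_left (hc x hx) (show 0 < r by positivity)
  rw [map_add, map_smul, add_mulVec, smul_mulVec, dotProduct_add, dotProduct_smul,
    smul_eq_mul] at hL
  rw [star_trivial, sub_mulVec, dotProduct_sub] at hdD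
  linarith

theorem posSemidef_of_lyapunovMap_le_deriv (hsym : ∀ τ ∈ Icc a b, (D τ).IsSymm)
    (hder : ∀ τ ∈ Icc a b, ∀ i j, HasDerivAt (fun s => D s i j) (dD τ i j) τ)
    (hineq : ∀ τ ∈ Icc a b, (dD τ - lyapunovMap A E (D τ)).PosSemidef)
    (ha : (D a).PosSemidef) : ∀ τ ∈ Icc a b, (D τ).PosSemidef := by
  obtain ⟨c, hc⟩ := exists_forall_unitSphere_dotProduct_mulVec_lt (lyapunovMap A E 1)
  intro τ hτ
  refine posSemidef_of_unitSphere_nonneg (hsym τ hτ) fun x hx =>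
    le_of_forall_pos_lt_add fun δ hδ => ?_
  simpa [div_mul_cancel₀ _ (Real.exp_pos _).ne'] using
    dotProduct_mulVec_add_mul_exp_pos A E hc hsym hder hineq ha
      (show 0 < δ / Real.exp (c * τ) by positivity) τ hτ x hx

end

theorem stmt5_general (n : ℕ) (A E : Matrix (Fin n) (Fin n) ℝ) (T : ℝ)
    (S dS Q : ℝ → Matrix (Fin n) (Fin n) ℝ)
    (hSsym : ∀ τ ∈ Icc (0 : ℝ) T, (S τ).IsSymm)
    (hSder : ∀ τ ∈ Icc (0 : ℝ) T, ∀ i j, HasDerivAt (fun s => S s i j) (dS τ i j) τ)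
    (hDLMI : ∀ τ ∈ Icc (0 : ℝ) T,
      (dS τ - (Aᵀ * S τ + S τ * A + Eᵀ * S τ * E)).PosSemidef)
    (hQder : ∀ τ ∈ Icc (0 : ℝ) T, ∀ i j,
      HasDerivAt (fun s => Q s i j) ((Aᵀ * Q τ + Q τ * A + Eᵀ * Q τ * E) i j) τ)
    (hQ0 : Q 0 = S 0) :
    ∀ τ ∈ Icc (0 : ℝ) T, (S τ - Q τ).PosSemidef := by
  intro τ hτ
  have hQsym := isSymm_of_hasDerivAt_lyapunovMap A E hQder
    (hQ0 ▸ hSsym 0 ⟨le_rfl, hτ.1.trans hτ.2⟩)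
  refine posSemidef_of_lyapunovMap_le_deriv A E (D := fun s => S s - Q s)
    (dD := fun s => dS s - lyapunovMap A E (Q s)) (fun s hs => (hSsym s hs).sub (hQsym s hs))
    (fun s hs i j => (hSder s hs i j).sub (hQder s hs i j)) (fun s hs => ?_)
    (by simpa [hQ0] using PosSemidef.zero) τ hτ
  rw [map_sub, sub_sub_sub_cancel_right]
  exact hDLMI s hs

/-- Matrix comparison lemma (Theorem 1, (iv) ⇒ (iii)): a solution of the differential LMI
dominates the exact solution of the Lyapunov matrix ODE in the Loewner order. -/
theorem stmt5 (n : ℕ) (A E : Matrix (Fin n) (Fin n) ℝ) (T : ℝ) (hT : 0 < T)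
    (S dS Q : ℝ → Matrix (Fin n) (Fin n) ℝ)
    (hSsym : ∀ τ ∈ Icc (0 : ℝ) T, (S τ).IsSymm)
    (hSder : ∀ τ ∈ Icc (0 : ℝ) T, ∀ i j, HasDerivAt (fun s => S s i j) (dS τ i j) τ)
    (hDLMI : ∀ τ ∈ Icc (0 : ℝ) T,
      (dS τ - (Aᵀ * S τ + S τ * A + Eᵀ * S τ * E)).PosSemidef)
    (hQder : ∀ τ ∈ Icc (0 : ℝ) T, ∀ i j,
      HasDerivAt (fun s => Q s i j) ((Aᵀ * Q τ + Q τ * A + Eᵀ * Q τ * E) i j) τ)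
    (hQ0 : Q 0 = S 0) :
    ∀ τ ∈ Icc (0 : ℝ) T, (S τ - Q τ).PosSemidef :=
  stmt5_general n A E T S dS Q hSsym hSder hDLMI hQder hQ0
end

section
/- Suppose S : [0, T̄] → Sym(n,ℝ) is differentiable, S(0) ≻ 0, satisfies -S'(τ) + AᵀS(τ) + S(τ)A ≼ 0 on [0,T̄] (deterministic case E_c = 0) and JᵀS(T̄)J - S(0) + εI ≼ 0 for some ε > 0. Then the matrix e^{AT̄}J satisfies Jᵀ(e^{AT̄})ᵀ S(0) e^{AT̄} J ≼ S(0) - εI; in particular the spectral radius of e^{AT̄}J is less than 1. -/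
/-!
Along the flow `u(τ) = e^{-τA} y` the quadratic form `u(τ)ᵀ S(τ) u(τ)` has derivative
`u(τ)ᵀ (S' - AᵀS - SA) u(τ) ≥ 0`, so it is monotone; comparing `τ = 0` with `τ = T̄` gives
`e^{AᵀT̄} S(0) e^{AT̄} ≼ S(T̄)`. Inserting this into the jump inequality yields
`Mᵀ S(0) M ≼ S(0) - εI` for `M = e^{AT̄} J`. If `Mv = μv` with `v ≠ 0` (over `ℂ`), then
`(1 - |μ|²) v* S(0) v ≥ ε |v|² > 0` while `v* S(0) v > 0`, hence `|μ| < 1`.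
-/

open Matrix Set
open scoped ComplexOrder

section Calculus

variable {n : Type*} [Fintype n] {t : ℝ}

theorem hasDerivAt_dotProduct {u v : ℝ → n → ℝ} {u' v' : n → ℝ}
    (hu : ∀ k, HasDerivAt (fun s => u s k) (u' k) t)
    (hv : ∀ k, HasDerivAt (fun s => v s k) (v' k) t) :
    HasDerivAt (fun s => u s ⬝ᵥ v s) (u' ⬝ᵥ v t + u t ⬝ᵥ v') t := by
  simp only [dotProduct, ← Finset.sum_add_distrib]
  exact HasDerivAt.fun_sum fun k _ => (hu k).mul (hv k)

theorem hasDerivAt_mulVec {S : ℝ → Matrix n n ℝ} {S' : Matrix n n ℝ} {u : ℝ → n → ℝ}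
    {u' : n → ℝ} (hS : ∀ i j, HasDerivAt (fun s => S s i j) (S' i j) t)
    (hu : ∀ k, HasDerivAt (fun s => u s k) (u' k) t) (i : n) :
    HasDerivAt (fun s => (S s *ᵥ u s) i) ((S' *ᵥ u t + S t *ᵥ u') i) t :=
  hasDerivAt_dotProduct (hS i) hu

theorem hasDerivAt_dotProduct_mulVec_s18 {S : ℝ → Matrix n n ℝ} {S' : Matrix n n ℝ}
    {u : ℝ → n → ℝ} {u' : n → ℝ} (hS : ∀ i j, HasDerivAt (fun s => S s i j) (S' i j) t)
    (hu : ∀ k, HasDerivAt (fun s => u s k) (u' k) t) :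
    HasDerivAt (fun s => u s ⬝ᵥ (S s *ᵥ u s))
      (u' ⬝ᵥ (S t *ᵥ u t) + u t ⬝ᵥ (S' *ᵥ u t + S t *ᵥ u')) t :=
  hasDerivAt_dotProduct hu (hasDerivAt_mulVec hS hu)

theorem hasDerivAt_exp_smul_apply [DecidableEq n] (A : Matrix n n ℝ) (i j : n) :
    HasDerivAt (fun s : ℝ => NormedSpace.exp (s • A) i j)
      ((A * NormedSpace.exp (t • A)) i j) t := by
  let := Matrix.linftyOpNormedRing (n := n) (α := ℝ)
  let := Matrix.linftyOpNormedAlgebra (n := n) (R := ℝ) (α := ℝ)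
  exact (LinearMap.toContinuousLinearMap (Matrix.entryLinearMap ℝ ℝ i j)).hasFDerivAt
    |>.comp_hasDerivAt t (hasDerivAt_exp_smul_const' A t)

end Calculus

section Lyapunov

variable {n : Type*} [Fintype n] [DecidableEq n]

theorem monotoneOn_quadForm_exp_smul_neg (A : Matrix n n ℝ) {S dS : ℝ → Matrix n n ℝ} {a b : ℝ}
    (hSder : ∀ τ ∈ Icc a b, ∀ i j, HasDerivAt (fun s => S s i j) (dS τ i j) τ)
    (hDLMI : ∀ τ ∈ Icc a b, (dS τ - (Aᵀ * S τ + S τ * A)).PosSemidef) (y : n → ℝ) :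
    MonotoneOn (fun τ => (NormedSpace.exp (τ • -A) *ᵥ y) ⬝ᵥ
      (S τ *ᵥ (NormedSpace.exp (τ • -A) *ᵥ y))) (Icc a b) := by
  set u : ℝ → n → ℝ := fun τ => NormedSpace.exp (τ • -A) *ᵥ y
  have hu : ∀ τ k, HasDerivAt (fun s => u s k) (-(A *ᵥ u τ) k) τ := fun τ k => by
    simpa [u, neg_mulVec, mulVec_mulVec] using
      hasDerivAt_mulVec (u' := 0) (fun i j => hasDerivAt_exp_smul_apply (t := τ) (-A) i j)
        (fun k => hasDerivAt_const τ (y k)) k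
  have hderiv : ∀ τ ∈ Icc a b, HasDerivAt (fun s => u s ⬝ᵥ (S s *ᵥ u s))
      (u τ ⬝ᵥ ((dS τ - (Aᵀ * S τ + S τ * A)) *ᵥ u τ)) τ := fun τ hτ => by
    convert hasDerivAt_dotProduct_mulVec_s18 (u' := -(A *ᵥ u τ)) (hSder τ hτ) (hu τ) using 1
    simp only [sub_mulVec, add_mulVec, ← mulVec_mulVec, dotProduct_sub, dotProduct_add,
      mulVec_neg, neg_dotProduct, dotProduct_neg]
    rw [dotProduct_transpose_mulVec, dotProduct_comm (S τ *ᵥ u τ)]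
    ring
  refine monotoneOn_of_hasDerivWithinAt_nonneg (convex_Icc a b)
    (fun τ hτ => (hderiv τ hτ).continuousAt.continuousWithinAt)
    (fun τ hτ => (hderiv τ (interior_subset hτ)).hasDerivWithinAt)
    (fun τ hτ => ?_)
  simpa using (hDLMI τ (interior_subset hτ)).dotProduct_mulVec_nonneg (u τ)

theorem quadForm_exp_smul_mulVec_le (A : Matrix n n ℝ) {S dS : ℝ → Matrix n n ℝ} {T : ℝ}
    (hT : 0 ≤ T) (hSder : ∀ τ ∈ Icc 0 T, ∀ i j, HasDerivAt (fun s => S s i j) (dS τ i j) τ)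
    (hDLMI : ∀ τ ∈ Icc 0 T, (dS τ - (Aᵀ * S τ + S τ * A)).PosSemidef) (y : n → ℝ) :
    (NormedSpace.exp (T • A) *ᵥ y) ⬝ᵥ (S 0 *ᵥ (NormedSpace.exp (T • A) *ᵥ y)) ≤
      y ⬝ᵥ (S T *ᵥ y) := by
  have hback : NormedSpace.exp (T • -A) *ᵥ (NormedSpace.exp (T • A) *ᵥ y) = y := by
    rw [mulVec_mulVec, smul_neg, ← Matrix.exp_add_of_commute (-(T • A)) (T • A)
      (Commute.neg_left rfl), neg_add_cancel, NormedSpace.exp_zero, one_mulVec]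
  simpa only [zero_smul, NormedSpace.exp_zero, one_mulVec, hback] using
    monotoneOn_quadForm_exp_smul_neg A hSder hDLMI (NormedSpace.exp (T • A) *ᵥ y)
      (left_mem_Icc.2 hT) (right_mem_Icc.2 hT) hT

omit [DecidableEq n] in
theorem dotProduct_transpose_mul_mul_mulVec (P M : Matrix n n ℝ) (z : n → ℝ) :
    z ⬝ᵥ ((Mᵀ * P * M) *ᵥ z) = (M *ᵥ z) ⬝ᵥ (P *ᵥ (M *ᵥ z)) := by
  rw [← mulVec_mulVec, ← mulVec_mulVec, dotProduct_transpose_mulVec, dotProduct_comm]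

theorem posSemidef_sub_transpose_mul_mul_of_flow_le {P₀ P₁ Φ J : Matrix n n ℝ} {ε : ℝ}
    (hP₀ : P₀.IsHermitian)
    (hflow : ∀ y, (Φ *ᵥ y) ⬝ᵥ (P₀ *ᵥ (Φ *ᵥ y)) ≤ y ⬝ᵥ (P₁ *ᵥ y))
    (hjump : (P₀ - (Jᵀ * P₁ * J + ε • 1)).PosSemidef) :
    (P₀ - ε • 1 - (Φ * J)ᵀ * P₀ * (Φ * J)).PosSemidef := by
  have hherm : (P₀ - ε • 1 - (Φ * J)ᵀ * P₀ * (Φ * J)).IsHermitian := by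
    refine (hP₀.sub (isHermitian_one.smul (IsSelfAdjoint.all ε))).sub ?_
    simpa only [conjTranspose_eq_transpose_of_trivial] using
      isHermitian_conjTranspose_mul_mul (Φ * J) hP₀
  refine .of_dotProduct_mulVec_nonneg hherm fun z => ?_
  have hj := hjump.dotProduct_mulVec_nonneg z
  have hf := mulVec_mulVec z Φ J ▸ hflow (J *ᵥ z)
  simp only [star_trivial, sub_mulVec, add_mulVec, dotProduct_sub, dotProduct_add,
    dotProduct_transpose_mul_mul_mulVec] at hj ⊢
  linarith

end Lyapunov

section SchurStability

variable {n : Type*} [Fintype n] [DecidableEq n]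

theorem exists_mulVec_eq_smul_of_mem_spectrum {K : Type*} [Field K] {M : Matrix n n K} {μ : K}
    (hμ : μ ∈ spectrum K M) : ∃ v : n → K, v ≠ 0 ∧ M *ᵥ v = μ • v := by
  rw [← Matrix.spectrum_toLin', ← Module.End.hasEigenvalue_iff_mem_spectrum] at hμ
  obtain ⟨v, hv⟩ := hμ.exists_hasEigenvector
  exact ⟨v, hv.2, by simpa using hv.apply_eq_smul⟩

omit [DecidableEq n] in
theorem star_dotProduct_conjTranspose_mulVec {𝕜 : Type*} [RCLike 𝕜] (M : Matrix n n 𝕜)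
    (v w : n → 𝕜) : star v ⬝ᵥ (Mᴴ *ᵥ w) = star (M *ᵥ v) ⬝ᵥ w := by
  rw [dotProduct_mulVec, star_mulVec]

theorem norm_lt_one_of_mem_spectrum_of_posDef {𝕜 : Type*} [RCLike 𝕜] {P M : Matrix n n 𝕜}
    (hP : P.PosDef) (hM : (P - Mᴴ * P * M).PosDef) {μ : 𝕜} (hμ : μ ∈ spectrum 𝕜 M) :
    ‖μ‖ < 1 := by
  obtain ⟨v, hv0, hv⟩ := exists_mulVec_eq_smul_of_mem_spectrum hμ
  have hquad : star v ⬝ᵥ ((P - Mᴴ * P * M) *ᵥ v) =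
      ((1 - ‖μ‖ ^ 2 : ℝ) : 𝕜) * (star v ⬝ᵥ (P *ᵥ v)) := by
    rw [sub_mulVec, dotProduct_sub, ← mulVec_mulVec, ← mulVec_mulVec,
      star_dotProduct_conjTranspose_mulVec, hv, star_smul, mulVec_smul, smul_dotProduct,
      dotProduct_smul, smul_smul, RCLike.star_def, RCLike.conj_mul, smul_eq_mul]
    push_cast
    ring
  have hpos := hM.re_dotProduct_pos hv0
  rw [hquad, RCLike.re_ofReal_mul] at hpos
  have : ‖μ‖ ^ 2 < 1 := by nlinarith [hP.re_dotProduct_pos hv0]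
  nlinarith [norm_nonneg μ]

open scoped MatrixOrder in
theorem Matrix.PosDef.map_ofReal {P : Matrix n n ℝ} (hP : P.PosDef) :
    (P.map ((↑) : ℝ → ℂ)).PosDef := by
  have hunit : IsUnit (P.map ((↑) : ℝ → ℂ)) := hP.isUnit.map Complex.ofRealHom.mapMatrix
  obtain ⟨B, rfl⟩ := CStarAlgebra.nonneg_iff_eq_star_mul_self.mp hP.posSemidef.nonneg
  have hB : (star B * B).map ((↑) : ℝ → ℂ) = (B.map (↑))ᴴ * B.map (↑) := by
    ext i j
    simp [Matrix.mul_apply, star_eq_conjTranspose]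
  rw [hB] at hunit ⊢
  exact (posSemidef_conjTranspose_mul_self _).posDef_iff_isUnit.mpr hunit

omit [DecidableEq n] in
theorem map_ofReal_sub_transpose_mul_mul (P M : Matrix n n ℝ) :
    (P - Mᵀ * P * M).map ((↑) : ℝ → ℂ) =
      P.map (↑) - (M.map (↑))ᴴ * P.map (↑) * M.map (↑) := by
  ext i j
  simp [Matrix.mul_apply]

theorem norm_lt_one_of_mem_spectrum_map_ofReal {P M : Matrix n n ℝ} (hP : P.PosDef)
    (hM : (P - Mᵀ * P * M).PosDef) {μ : ℂ} (hμ : μ ∈ spectrum ℂ (M.map ((↑) : ℝ → ℂ))) :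
    ‖μ‖ < 1 :=
  norm_lt_one_of_mem_spectrum_of_posDef hP.map_ofReal
    (map_ofReal_sub_transpose_mul_mul P M ▸ hM.map_ofReal) hμ

end SchurStability

theorem stmt18_general (n : ℕ) (A J : Matrix (Fin n) (Fin n) ℝ) (T ε : ℝ)
    (hT : 0 < T) (hε : 0 < ε)
    (S dS : ℝ → Matrix (Fin n) (Fin n) ℝ)
    (hS0 : (S 0).PosDef)
    (hSder : ∀ τ ∈ Icc (0 : ℝ) T, ∀ i j, HasDerivAt (fun s => S s i j) (dS τ i j) τ)
    (hDLMI : ∀ τ ∈ Icc (0 : ℝ) T, (dS τ - (Aᵀ * S τ + S τ * A)).PosSemidef)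
    (hjump : (S 0 - (Jᵀ * S T * J + ε • (1 : Matrix (Fin n) (Fin n) ℝ))).PosSemidef) :
    (S 0 - ε • (1 : Matrix (Fin n) (Fin n) ℝ) -
      (NormedSpace.exp (T • A) * J)ᵀ * S 0 * (NormedSpace.exp (T • A) * J)).PosSemidef ∧
    (∀ μ ∈ spectrum ℂ ((NormedSpace.exp (T • A) * J).map (fun x : ℝ => (x : ℂ))),
      ‖μ‖ < 1) := by
  set M := NormedSpace.exp (T • A) * J
  have hlyap : (S 0 - ε • 1 - Mᵀ * S 0 * M).PosSemidef :=
    posSemidef_sub_transpose_mul_mul_of_flow_le hS0.isHermitian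
      (quadForm_exp_smul_mulVec_le A hT.le hSder hDLMI) hjump
  have hstrict : (S 0 - Mᵀ * S 0 * M).PosDef := by
    convert PosDef.posSemidef_add hlyap (PosDef.one.smul hε) using 1
    abel
  exact ⟨hlyap, fun μ hμ => norm_lt_one_of_mem_spectrum_map_ofReal hS0 hstrict hμ⟩

/-- Deterministic specialization of Theorem 1: the clock-dependent LMI certificate yields
the strict discrete Lyapunov inequality `Mᵀ S(0) M ≼ S(0) - εI` for the monodromy matrix
`M = e^{AT̄} J`, hence Schur stability of `M`. -/
theorem stmt18 (n : ℕ) (A J : Matrix (Fin n) (Fin n) ℝ) (T ε : ℝ)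
    (hT : 0 < T) (hε : 0 < ε)
    (S dS : ℝ → Matrix (Fin n) (Fin n) ℝ)
    (hS0 : (S 0).PosDef)
    (hSsym : ∀ τ ∈ Icc (0 : ℝ) T, (S τ).IsSymm)
    (hSder : ∀ τ ∈ Icc (0 : ℝ) T, ∀ i j, HasDerivAt (fun s => S s i j) (dS τ i j) τ)
    (hDLMI : ∀ τ ∈ Icc (0 : ℝ) T, (dS τ - (Aᵀ * S τ + S τ * A)).PosSemidef)
    (hjump : (S 0 - (Jᵀ * S T * J + ε • (1 : Matrix (Fin n) (Fin n) ℝ))).PosSemidef) :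
    (S 0 - ε • (1 : Matrix (Fin n) (Fin n) ℝ) -
      (NormedSpace.exp (T • A) * J)ᵀ * S 0 * (NormedSpace.exp (T • A) * J)).PosSemidef ∧
    (∀ μ ∈ spectrum ℂ ((NormedSpace.exp (T • A) * J).map (fun x : ℝ => (x : ℂ))),
      ‖μ‖ < 1) :=
  stmt18_general n A J T ε hT hε S dS hS0 hSder hDLMI hjump
end
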